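/- Let 0 < q < 1 and let ν be a positive integer. For all z ∈ ℂ and all t ∈ ℂ, F_q^{−,ν}(q·t, z) = e^{−t}·( F_q^{−,ν}(t,z) − t^ν·q^{ν(1−z)}·e^{t·[1−z]_q} ). -/

import Mathlib

/-!
The identity `[w + 1]_q = q [w]_q + 1` turns `exp (q t [n - z]_q)` into
`e^{-t} exp (t [n + 1 - z]_q)`, and `(q t)^ν q^{ν(n - z)} = t^ν q^{ν(n + 1 - z)}`, so the series for
`F(q t, z)` is `e^{-t}` times the series for `F(t, z)` with its first term removed. The series
converges absolutely because its terms are `O((q^ν)^n)`: `q^{ν(n - z)}` decays geometrically while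
`[n - z]_q` stays bounded.
-/

open Complex

/-- `q^w := exp(w · log q)` with the real logarithm of `q`. -/
noncomputable def qpow (q : ℝ) (w : ℂ) : ℂ := Complex.exp (w * Real.log q)

/-- `[w]_q := (1 - q^w)/(1 - q)`. -/
noncomputable def qbr (q : ℝ) (w : ℂ) : ℂ := (1 - qpow q w) / (1 - (q : ℂ))

/-- the term of index `n+1` of the series defining `F_q^{-,ν}(t,z)`. -/
noncomputable def FmTerm (q : ℝ) (ν : ℕ) (t z : ℂ) (n : ℕ) : ℂ :=
  qpow q ((ν : ℂ) * (((n : ℂ) + 1) - z)) * Complex.exp (t * qbr q (((n : ℂ) + 1) - z))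

/-- `F_q^{-,ν}(t,z)`. -/
noncomputable def Fm (q : ℝ) (ν : ℕ) (t z : ℂ) : ℂ := t ^ ν * ∑' n : ℕ, FmTerm q ν t z n

lemma qpow_add (q : ℝ) (a b : ℂ) : qpow q (a + b) = qpow q a * qpow q b := by
  rw [qpow, qpow, qpow, add_mul, Complex.exp_add]

lemma qpow_natCast {q : ℝ} (hq0 : 0 < q) (n : ℕ) : qpow q n = (q : ℂ) ^ n := by
  rw [qpow, Complex.exp_nat_mul, ← Complex.ofReal_exp, Real.exp_log hq0]

lemma qpow_natCast_add {q : ℝ} (hq0 : 0 < q) (n : ℕ) (w : ℂ) :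
    qpow q (n + w) = (q : ℂ) ^ n * qpow q w := by
  rw [qpow_add, qpow_natCast hq0]

lemma one_sub_ofReal_ne_zero {q : ℝ} (hq1 : q ≠ 1) : (1 : ℂ) - q ≠ 0 :=
  sub_ne_zero.mpr (by exact_mod_cast hq1.symm)

lemma qbr_add_one {q : ℝ} (hq0 : 0 < q) (hq1 : q ≠ 1) (w : ℂ) :
    qbr q (w + 1) = q * qbr q w + 1 := by
  have hden := one_sub_ofReal_ne_zero hq1
  have hqpow : qpow q (w + 1) = q * qpow q w := by
    simpa [add_comm] using qpow_natCast_add hq0 1 w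
  rw [qbr, qbr, hqpow, mul_div_assoc', div_add_one hden]
  ring

lemma norm_qbr_natCast_add_le {q : ℝ} (hq0 : 0 < q) (hq1 : q < 1) (n : ℕ) (w : ℂ) :
    ‖qbr q (n + w)‖ ≤ (1 + ‖qpow q w‖) / (1 - q) := by
  have hden : ‖(1 : ℂ) - q‖ = 1 - q := by
    rw [← Complex.ofReal_one, ← Complex.ofReal_sub, Complex.norm_real,
      Real.norm_of_nonneg (by linarith)]
  rw [qbr, norm_div, hden, qpow_natCast_add hq0]
  gcongr
  calc ‖1 - (q : ℂ) ^ n * qpow q w‖ ≤ ‖(1 : ℂ)‖ + ‖(q : ℂ) ^ n‖ * ‖qpow q w‖ :=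
        (norm_sub_le _ _).trans_eq (by rw [norm_mul])
    _ ≤ 1 + 1 * ‖qpow q w‖ := by
        gcongr
        · simp
        · rw [norm_pow, Complex.norm_real, Real.norm_of_nonneg hq0.le]
          exact pow_le_one₀ hq0.le hq1.le
    _ = 1 + ‖qpow q w‖ := by ring

lemma FmTerm_eq {q : ℝ} (hq0 : 0 < q) (ν : ℕ) (t z : ℂ) (n : ℕ) :
    FmTerm q ν t z n =
      ((q : ℂ) ^ ν) ^ n * (qpow q (ν * (1 - z)) * Complex.exp (t * qbr q (n + (1 - z)))) := by
  have hexp : (ν : ℂ) * ((n + 1) - z) = ((ν * n : ℕ) : ℂ) + ν * (1 - z) := by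
    push_cast; ring
  rw [FmTerm, hexp, qpow_natCast_add hq0, add_sub_assoc, ← pow_mul]
  ring

lemma norm_FmTerm_le {q : ℝ} (hq0 : 0 < q) (hq1 : q < 1) (ν : ℕ) (t z : ℂ) (n : ℕ) :
    ‖FmTerm q ν t z n‖ ≤ (q ^ ν) ^ n *
      (‖qpow q (ν * (1 - z))‖ * Real.exp (‖t‖ * ((1 + ‖qpow q (1 - z)‖) / (1 - q)))) := by
  rw [FmTerm_eq hq0, norm_mul, norm_mul, norm_pow, norm_pow, Complex.norm_real,
    Real.norm_of_nonneg hq0.le]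
  gcongr
  calc ‖Complex.exp (t * qbr q (n + (1 - z)))‖ ≤ Real.exp ‖t * qbr q (n + (1 - z))‖ :=
        Complex.norm_exp_le_exp_norm _
    _ ≤ _ := by
        rw [norm_mul]
        gcongr
        exact norm_qbr_natCast_add_le hq0 hq1 n (1 - z)

lemma summable_FmTerm {q : ℝ} (hq0 : 0 < q) (hq1 : q < 1) {ν : ℕ} (hν : ν ≠ 0) (t z : ℂ) :
    Summable (FmTerm q ν t z) :=
  have hgeom := summable_geometric_of_lt_one (pow_nonneg hq0.le ν) (pow_lt_one₀ hq0.le hq1 hν)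
  (hgeom.mul_right _).of_norm_bounded (norm_FmTerm_le hq0 hq1 ν t z)

lemma FmTerm_zero (q : ℝ) (ν : ℕ) (t z : ℂ) :
    FmTerm q ν t z 0 = qpow q (ν * (1 - z)) * Complex.exp (t * qbr q (1 - z)) := by
  simp [FmTerm]

lemma pow_mul_FmTerm_mul_left {q : ℝ} (hq0 : 0 < q) (hq1 : q ≠ 1) (ν : ℕ) (t z : ℂ) (n : ℕ) :
    (q : ℂ) ^ ν * FmTerm q ν (q * t) z n = Complex.exp (-t) * FmTerm q ν t z (n + 1) := by
  have hw : ((n + 1 : ℕ) : ℂ) + 1 - z = ((n : ℂ) + 1 - z) + 1 := by push_cast; ring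
  have hqpow : qpow q (ν * (((n : ℂ) + 1 - z) + 1)) =
      (q : ℂ) ^ ν * qpow q (ν * ((n : ℂ) + 1 - z)) := by
    rw [mul_add, mul_one, add_comm, qpow_natCast_add hq0]
  have hexp : Complex.exp (q * t * qbr q ((n : ℂ) + 1 - z)) =
      Complex.exp (-t) * Complex.exp (t * qbr q (((n : ℂ) + 1 - z) + 1)) := by
    rw [qbr_add_one hq0 hq1, ← Complex.exp_add]
    ring_nf
  rw [FmTerm, FmTerm, hw, hqpow, hexp]
  ring

theorem stmt3 (q : ℝ) (hq0 : 0 < q) (hq1 : q < 1) (ν : ℕ) (hν : 0 < ν) (z t : ℂ) :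
    Fm q ν ((q : ℂ) * t) z =
      Complex.exp (-t) *
        (Fm q ν t z - t ^ ν * qpow q ((ν : ℂ) * (1 - z)) * Complex.exp (t * qbr q (1 - z))) := by
  have hshift : ∑' n, (q : ℂ) ^ ν * FmTerm q ν (q * t) z n =
      Complex.exp (-t) * ∑' n, FmTerm q ν t z (n + 1) := by
    rw [← tsum_mul_left]
    exact tsum_congr (pow_mul_FmTerm_mul_left hq0 hq1.ne ν t z)
  rw [Fm, Fm, mul_pow, mul_comm ((q : ℂ) ^ ν), mul_assoc, ← tsum_mul_left, hshift,
    (summable_FmTerm hq0 hq1 hν.ne' t z).tsum_eq_zero_add, FmTerm_zero]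
  ring
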